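/- Let X, Y ∈ SL(2,ℝ) with |tr(X)| > 2 and |tr(Y)| > 2, and suppose their axes intersect and are distinct: there exists P ∈ ℍ minimizing both displacement functions (dist(P, X·P) ≤ dist(w, X·w) and dist(P, Y·P) ≤ dist(w, Y·w) for all w ∈ ℍ), and the set of points minimizing the displacement of X is not equal to the set of points minimizing the displacement of Y. Then the composition X·Y is hyperbolic: |tr(X·Y)| > 2. -/

import Mathlib

/-!
For `g = !![a, b; c, d] ∈ SL(2, ℝ)` one has
`2 cosh d(z, g • z) = tr(g)² - 2 + (S_g(z) / Im z)²` with `S_g(z) = c |z|² + (d - a) Re z - b`,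
so for hyperbolic `g` the axis is the geodesic `S_g = 0`, and two such geodesics through `P`
coincide exactly when their coefficient vectors `(c, d - a)` are parallel.
Conjugating `P` to `i` makes `X` and `Y` symmetric, `X = s + U` and `Y = t + V` with `U`, `V`
traceless. Then `det = 1` says that `(s, U)` and `(t, V)` are unit timelike vectors in `ℝ^{1,2}`,
`tr(XY) = 2 (s t + ⟨U, V⟩)`, and the reverse Cauchy–Schwarz inequality `|s t| > 1 + |⟨U, V⟩|`,
strict because `U` and `V` are not parallel, gives `|tr(XY)| > 2`.
-/

open UpperHalfPlane Matrix
open scoped MatrixGroups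

theorem det_fin_two_eq_one {R : Type*} [CommRing R] (g : SL(2, R)) :
    g 0 0 * g 1 1 - g 0 1 * g 1 0 = 1 := by
  rw [← Matrix.det_fin_two]
  exact g.det_coe

noncomputable def axisForm (g : SL(2, ℝ)) (z : ℍ) : ℝ :=
  g 1 0 * (z.re ^ 2 + z.im ^ 2) + (g 1 1 - g 0 0) * z.re - g 0 1

theorem two_mul_cosh_dist_smul (g : SL(2, ℝ)) (z : ℍ) :
    2 * Real.cosh (dist z (g • z)) =
      (g : Matrix (Fin 2) (Fin 2) ℝ).trace ^ 2 - 2 + (axisForm g z / z.im) ^ 2 := by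
  set D : ℂ := g 1 0 * z + g 1 1
  have hD : D ≠ 0 := denom_ne_zero g z
  have hsmul : ((g • z : ℍ) : ℂ) = (g 0 0 * z + g 0 1) / D := by
    simp [coe_specialLinearGroup_apply, D]
  have him : (g • z).im = z.im / Complex.normSq D := by
    rw [MulAction.compHom_smul_def, im_smul_eq_div_normSq]
    simp [D, denom]
  have hsub : (z : ℂ) - (g • z : ℍ) = (g 1 0 * z ^ 2 + (g 1 1 - g 0 0) * z - g 0 1) / D := by
    rw [hsmul, eq_div_iff hD, sub_mul, div_mul_cancel₀ _ hD]
    ring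
  have hnormSq : Complex.normSq (g 1 0 * z ^ 2 + (g 1 1 - g 0 0) * z - g 0 1) =
      ((g 0 0 + g 1 1) ^ 2 - 4) * z.im ^ 2 + axisForm g z ^ 2 := by
    simp only [axisForm, Complex.normSq_apply, Complex.sub_re, Complex.sub_im, Complex.add_re,
      Complex.add_im, Complex.mul_re, Complex.mul_im, Complex.ofReal_re, Complex.ofReal_im,
      pow_two, ← UpperHalfPlane.coe_re, ← UpperHalfPlane.coe_im]
    linear_combination (-4 * (z : ℂ).im ^ 2) * det_fin_two_eq_one g
  have := z.im_ne_zero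
  have := Complex.normSq_pos.mpr hD
  rw [cosh_dist, Complex.dist_eq, Complex.sq_norm, hsub, Complex.normSq_div, hnormSq, him,
    trace_fin_two]
  field_simp
  ring

theorem exists_axisForm_eq_zero (g : SL(2, ℝ))
    (hg : 2 < |(g : Matrix (Fin 2) (Fin 2) ℝ).trace|) : ∃ z : ℍ, axisForm g z = 0 := by
  have hdet := det_fin_two_eq_one g
  rw [trace_fin_two] at hg
  have htr : 4 < (g 0 0 + g 1 1) ^ 2 := by nlinarith [sq_abs (g 0 0 + g 1 1)]
  by_cases hc : g 1 0 = 0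
  · have hda : g 1 1 - g 0 0 ≠ 0 := by
      intro h
      rw [hc] at hdet
      nlinarith
    refine ⟨⟨⟨g 0 1 / (g 1 1 - g 0 0), 1⟩, one_pos⟩, ?_⟩
    simp only [axisForm, hc, UpperHalfPlane.re, UpperHalfPlane.im]
    field_simp
    ring
  · have hpos : 0 < (g 0 0 + g 1 1) ^ 2 - 4 := by linarith
    refine ⟨⟨⟨(g 0 0 - g 1 1) / (2 * g 1 0), √((g 0 0 + g 1 1) ^ 2 - 4) / (2 * |g 1 0|)⟩,
      by positivity⟩, ?_⟩
    simp only [axisForm, UpperHalfPlane.re, UpperHalfPlane.im, div_pow, Real.sq_sqrt hpos.le,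
      mul_pow, sq_abs]
    field_simp
    linear_combination 4 * hdet

theorem forall_dist_smul_le_iff_axisForm_eq_zero (g : SL(2, ℝ))
    (hg : 2 < |(g : Matrix (Fin 2) (Fin 2) ℝ).trace|) (z : ℍ) :
    (∀ w : ℍ, dist z (g • z) ≤ dist w (g • w)) ↔ axisForm g z = 0 := by
  have hle (w : ℍ) : dist z (g • z) ≤ dist w (g • w) ↔
      (axisForm g z / z.im) ^ 2 ≤ (axisForm g w / w.im) ^ 2 := by
    rw [← abs_of_nonneg (dist_nonneg : 0 ≤ dist z (g • z)),
      ← abs_of_nonneg (dist_nonneg : 0 ≤ dist w (g • w)), ← Real.cosh_le_cosh,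
      ← mul_le_mul_iff_right₀ two_pos, two_mul_cosh_dist_smul, two_mul_cosh_dist_smul,
      add_le_add_iff_left]
  constructor
  · intro hmin
    obtain ⟨w, hw⟩ := exists_axisForm_eq_zero g hg
    have := (hle w).mp (hmin w)
    rw [hw, zero_div, zero_pow two_ne_zero, sq_nonpos_iff, div_eq_zero_iff] at this
    exact this.resolve_right z.im_ne_zero
  · intro hz w
    rw [hle, hz, zero_div, sq_eq_zero_iff.mpr rfl]
    positivity

theorem axisForm_coeffs_ne_zero (g : SL(2, ℝ))
    (hg : 2 < |(g : Matrix (Fin 2) (Fin 2) ℝ).trace|) : g 1 0 ≠ 0 ∨ g 1 1 - g 0 0 ≠ 0 := by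
  by_contra! h
  have hdet := det_fin_two_eq_one g
  rw [trace_fin_two, show g 1 1 = g 0 0 by linarith [h.2]] at hg
  rw [h.1, show g 1 1 = g 0 0 by linarith [h.2]] at hdet
  nlinarith [sq_abs (g 0 0 + g 0 0)]

theorem axisForm_eq_zero_of_parallel {g h : SL(2, ℝ)} {P z : ℍ}
    (hh : 2 < |(h : Matrix (Fin 2) (Fin 2) ℝ).trace|) (hgP : axisForm g P = 0)
    (hhP : axisForm h P = 0) (hpar : g 1 0 * (h 1 1 - h 0 0) = h 1 0 * (g 1 1 - g 0 0))
    (hz : axisForm h z = 0) : axisForm g z = 0 := by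
  have hc_mul : h 1 0 * axisForm g z = 0 := by
    unfold axisForm at *
    linear_combination g 1 0 * hz + h 1 0 * hgP - g 1 0 * hhP - (z.re - P.re) * hpar
  have hda_mul : (h 1 1 - h 0 0) * axisForm g z = 0 := by
    unfold axisForm at *
    linear_combination (g 1 1 - g 0 0) * hz + (h 1 1 - h 0 0) * hgP - (g 1 1 - g 0 0) * hhP
      + (z.re ^ 2 + z.im ^ 2 - P.re ^ 2 - P.im ^ 2) * hpar
  rcases axisForm_coeffs_ne_zero h hh with hc | hda
  · exact (mul_eq_zero.mp hc_mul).resolve_left hc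
  · exact (mul_eq_zero.mp hda_mul).resolve_left hda

theorem one_lt_abs_mul_add_mul_add_mul {s t u₁ u₂ v₁ v₂ : ℝ} (hs : s ^ 2 = 1 + u₁ ^ 2 + u₂ ^ 2)
    (ht : t ^ 2 = 1 + v₁ ^ 2 + v₂ ^ 2) (huv : u₁ * v₂ - u₂ * v₁ ≠ 0) :
    1 < |s * t + (u₁ * v₁ + u₂ * v₂)| := by
  set w := u₁ * v₁ + u₂ * v₂
  have hst : (1 + |w|) ^ 2 < (s * t) ^ 2 := by
    have : 0 < (u₁ * v₂ - u₂ * v₁) ^ 2 := by positivity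
    rw [mul_pow, hs, ht]
    nlinarith [sq_abs w, abs_le.mp (le_refl |w|), sq_nonneg (u₁ - v₁), sq_nonneg (u₁ + v₁),
      sq_nonneg (u₂ - v₂), sq_nonneg (u₂ + v₂)]
  have hst' : 1 + |w| < |s * t| := by
    simpa [abs_of_nonneg (by positivity : 0 ≤ 1 + |w|)] using sq_lt_sq.mp hst
  have := abs_sub_abs_le_abs_sub (s * t) (-w)
  rw [abs_neg, sub_neg_eq_add] at this
  linarith

/- Conjugating by `z ↦ (z - P.re) / P.im` turns `g` into the symmetric matrix
`!![s + u₁, u₂; u₂, s - u₁]` with `s`, `u₁`, `u₂` the three quantities below. -/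
theorem sq_half_trace_of_axisForm_eq_zero {g : SL(2, ℝ)} {P : ℍ} (hgP : axisForm g P = 0) :
    ((g 0 0 + g 1 1) / 2) ^ 2 =
      1 + ((g 0 0 - g 1 1) / 2 - g 1 0 * P.re) ^ 2 + (g 1 0 * P.im) ^ 2 := by
  unfold axisForm at hgP
  linear_combination det_fin_two_eq_one g - g 1 0 * hgP

theorem two_lt_abs_trace_mul_of_axisForm_eq_zero {g h : SL(2, ℝ)} {P : ℍ}
    (hgP : axisForm g P = 0) (hhP : axisForm h P = 0)
    (hpar : g 1 0 * (h 1 1 - h 0 0) ≠ h 1 0 * (g 1 1 - g 0 0)) :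
    2 < |((g * h : SL(2, ℝ)) : Matrix (Fin 2) (Fin 2) ℝ).trace| := by
  have htrace : ((g * h : SL(2, ℝ)) : Matrix (Fin 2) (Fin 2) ℝ).trace =
      2 * ((g 0 0 + g 1 1) / 2 * ((h 0 0 + h 1 1) / 2) +
        (((g 0 0 - g 1 1) / 2 - g 1 0 * P.re) * ((h 0 0 - h 1 1) / 2 - h 1 0 * P.re) +
          g 1 0 * P.im * (h 1 0 * P.im))) := by
    unfold axisForm at hgP hhP
    simp only [Matrix.SpecialLinearGroup.coe_mul, trace_fin_two, mul_apply, Fin.sum_univ_two]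
    linear_combination -h 1 0 * hgP - g 1 0 * hhP
  have hcross : ((g 0 0 - g 1 1) / 2 - g 1 0 * P.re) * (h 1 0 * P.im) -
      g 1 0 * P.im * ((h 0 0 - h 1 1) / 2 - h 1 0 * P.re) ≠ 0 := by
    have hm : (g 1 0 * (h 1 1 - h 0 0) - h 1 0 * (g 1 1 - g 0 0)) * P.im ≠ 0 :=
      mul_ne_zero (sub_ne_zero.mpr hpar) P.im_ne_zero
    contrapose! hm
    linear_combination 2 * hm
  rw [htrace, abs_mul, abs_two]
  linarith [one_lt_abs_mul_add_mul_add_mul (sq_half_trace_of_axisForm_eq_zero hgP)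
    (sq_half_trace_of_axisForm_eq_zero hhP) hcross]

/-- If two hyperbolic elements of SL(2,ℝ) have distinct axes that intersect,
then their composition is hyperbolic. -/
theorem product_hyperbolic_of_crossing_axes (X Y : SL(2, ℝ))
    (hX : |Matrix.trace (X : Matrix (Fin 2) (Fin 2) ℝ)| > 2)
    (hY : |Matrix.trace (Y : Matrix (Fin 2) (Fin 2) ℝ)| > 2)
    (P : ℍ)
    (hPX : ∀ w : ℍ, dist P (X • P) ≤ dist w (X • w))
    (hPY : ∀ w : ℍ, dist P (Y • P) ≤ dist w (Y • w))
    (haxes : {z : ℍ | ∀ w : ℍ, dist z (X • z) ≤ dist w (X • w)} ≠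
             {z : ℍ | ∀ w : ℍ, dist z (Y • z) ≤ dist w (Y • w)}) :
    |Matrix.trace ((X * Y : SL(2, ℝ)) : Matrix (Fin 2) (Fin 2) ℝ)| > 2 := by
  have hXP := (forall_dist_smul_le_iff_axisForm_eq_zero X hX P).mp hPX
  have hYP := (forall_dist_smul_le_iff_axisForm_eq_zero Y hY P).mp hPY
  refine two_lt_abs_trace_mul_of_axisForm_eq_zero hXP hYP fun hpar => haxes ?_
  ext z
  simp only [Set.mem_ofPred_eq, forall_dist_smul_le_iff_axisForm_eq_zero _ hX,
    forall_dist_smul_le_iff_axisForm_eq_zero _ hY]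
  exact ⟨axisForm_eq_zero_of_parallel hX hYP hXP hpar.symm,
    axisForm_eq_zero_of_parallel hY hXP hYP hpar⟩
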